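/- Let F be a weakly union-closed family of nonempty subsets of a finite set N covering N. Then there exists a capacity v on (F, ⊆) (a nonnegative valuation that is monotone with respect to inclusion) whose extension v̂ to 2^N, given by v̂(S) = Σ { v(F) : F maximal in F(S) }, is not monotone on (2^N, ⊆). In particular, with N = {1,2,3,4,5} and F = {12345, 1234, 2345, 1345, 124, 234, 345, 12, 35, 2, 5}, the capacity v with v(N) = v(12) = v(35) = 1 and suitable values elsewhere satisfies v̂({1,2,3,5}) = 2 > 1 = v̂(N). -/

import Mathlib

/-!
Passing from `S` to a larger set can merge several maximal members of `F(S)` into one. In the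
paper's family, the maximal members of `F(1235)` are the disjoint sets `12` and `35`, while `N`
itself belongs to the family and is the only maximal member of `F(N)`. Hence already the
constant capacity `1` gives `v̂(1235) = 2 > 1 = v̂(N)`.
-/

open scoped Classical

/-- The extension of a valuation on a weakly union-closed family: the sum of v over the
maximal members of F(S) = {F ∈ Fam : F ⊆ S}. -/
noncomputable def vhat {N : Type*} [DecidableEq N]
    (Fam : Finset (Finset N)) (v : Finset N → ℝ) (S : Finset N) : ℝ :=
  ∑ F ∈ Fam.filter (fun F => F ⊆ S ∧ ∀ F' ∈ Fam, F' ⊆ S → F ⊆ F' → F = F'), v F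

section MaximalMembers

variable {N : Type*} [DecidableEq N]

def maximalMembers (Fam : Finset (Finset N)) (S : Finset N) : Finset (Finset N) :=
  Fam.filter (fun F => F ⊆ S ∧ ∀ F' ∈ Fam, F' ⊆ S → F ⊆ F' → F = F')

theorem vhat_eq_sum_maximalMembers (Fam : Finset (Finset N)) (v : Finset N → ℝ)
    (S : Finset N) : vhat Fam v S = ∑ F ∈ maximalMembers Fam S, v F :=
  rfl

theorem maximalMembers_univ_of_univ_mem [Fintype N] {Fam : Finset (Finset N)}
    (h : Finset.univ ∈ Fam) : maximalMembers Fam Finset.univ = {Finset.univ} := by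
  ext F
  simp only [maximalMembers, Finset.mem_filter, Finset.subset_univ, true_implies, true_and,
    Finset.mem_singleton]
  exact ⟨fun ⟨_, hmax⟩ => hmax _ h (Finset.subset_univ F), fun hF => hF ▸ ⟨h, fun _ _ hsub => (Finset.univ_subset_iff.mp hsub).symm⟩⟩

theorem vhat_univ_of_univ_mem [Fintype N] {Fam : Finset (Finset N)} (v : Finset N → ℝ)
    (h : Finset.univ ∈ Fam) : vhat Fam v Finset.univ = v Finset.univ := by
  rw [vhat_eq_sum_maximalMembers, maximalMembers_univ_of_univ_mem h, Finset.sum_singleton]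

end MaximalMembers

-- The paper's elements `1, …, 5` are coded `0, …, 4`.
def paperFamily : Finset (Finset (Fin 5)) :=
  {{0, 1, 2, 3, 4}, {0, 1, 2, 3}, {1, 2, 3, 4}, {0, 2, 3, 4}, {0, 1, 3}, {1, 2, 3}, {2, 3, 4},
    {0, 1}, {2, 4}, {1}, {4}}

theorem maximalMembers_paperFamily_1235 :
    maximalMembers paperFamily {0, 1, 2, 4} = {{0, 1}, {2, 4}} := by
  decide

theorem vhat_paperFamily_1235 (v : Finset (Fin 5) → ℝ) :
    vhat paperFamily v {0, 1, 2, 4} = v {0, 1} + v {2, 4} := by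
  rw [vhat_eq_sum_maximalMembers, maximalMembers_paperFamily_1235,
    Finset.sum_pair (by decide)]

theorem stmt_12 :
    ∃ (Fam : Finset (Finset (Fin 5))) (v : Finset (Fin 5) → ℝ),
      (∀ F ∈ Fam, F.Nonempty) ∧
      (∀ x : Fin 5, ∃ F ∈ Fam, x ∈ F) ∧
      (∀ F ∈ Fam, ∀ G ∈ Fam, (F ∩ G).Nonempty → F ∪ G ∈ Fam) ∧
      (∀ F ∈ Fam, 0 ≤ v F) ∧
      (∀ F ∈ Fam, ∀ G ∈ Fam, F ⊆ G → v F ≤ v G) ∧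
      v Finset.univ = 1 ∧ v {0, 1} = 1 ∧ v {2, 4} = 1 ∧
      vhat Fam v {0, 1, 2, 4} = 2 ∧ vhat Fam v Finset.univ = 1 ∧
      ¬ (∀ S T : Finset (Fin 5), S ⊆ T → vhat Fam v S ≤ vhat Fam v T) := by
  have h1235 : vhat paperFamily (fun _ => 1) {0, 1, 2, 4} = 2 := by
    rw [vhat_paperFamily_1235]; norm_num
  have huniv : vhat paperFamily (fun _ => 1) Finset.univ = 1 :=
    vhat_univ_of_univ_mem _ (by decide)
  refine ⟨paperFamily, fun _ => 1, by decide, by decide, by decide, fun _ _ => zero_le_one,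
    fun _ _ _ _ _ => le_rfl, rfl, rfl, rfl, h1235, huniv, fun hmono => ?_⟩
  have := hmono {0, 1, 2, 4} Finset.univ (Finset.subset_univ _)
  rw [h1235, huniv] at this
  norm_num at this
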